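/- Let F be a free filter on ℕ such that ξ(F) is Fréchet–Urysohn. For every nontrivial convergent sequence S in ξ(F) and every n ∈ ℕ, the set D_S^n = {T ∈ S_c(ξ(F)) : |T ∩ S| ≥ n} is open and dense in S_c(ξ(F)). -/

import Mathlib

/-!
In `ξ(F)` every point other than `F` is isolated, so a nontrivial convergent sequence is
just an infinite set converging to `F`, and adding finitely many points to one gives another.
Requiring a finite set `u` to lie in `T` is a Vietoris-open condition: the points of `u` other
than `F` are isolated, so "`T` meets `{a}`" is a hit set, while `F` lies in every `T`. Every
Vietoris neighbourhood of `T` contains all sets between `T` and some open `U ⊇ T`; as `S`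
converges to `F ∈ U`, infinitely many points of `S` lie in `U`, and adding `n` of them to `T`
lands in `D_S^n`.
-/

open Set TopologicalSpace Filter

/-- The Vietoris topology on collections of subsets of `X`. -/
def vietoris (X : Type*) [TopologicalSpace X] : TopologicalSpace (Set X) :=
  TopologicalSpace.generateFrom
    ({t | ∃ U : Set X, IsOpen U ∧ t = {S : Set X | S ⊆ U}} ∪
     {t | ∃ U : Set X, IsOpen U ∧ t = {S : Set X | (S ∩ U).Nonempty}})

/-- The set `S` converges to `x`: `x ∈ S` and `S \ U` is finite for every open
neighborhood `U` of `x`. -/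
def ConvTo {X : Type*} [TopologicalSpace X] (S : Set X) (x : X) : Prop :=
  x ∈ S ∧ ∀ U : Set X, IsOpen U → x ∈ U → (S \ U).Finite

/-- `S` is a nontrivial convergent sequence in `X`: a countably infinite closed set with a
unique non-isolated point `x` (all other points are isolated in `S`), converging to `x`. -/
def IsNCS (X : Type*) [TopologicalSpace X] (S : Set X) : Prop :=
  S.Infinite ∧ S.Countable ∧ IsClosed S ∧ ∃ x : X, ConvTo S x ∧
    (∀ y ∈ S, y ≠ x → ∃ U : Set X, IsOpen U ∧ U ∩ S = {y}) ∧
    ¬ ∃ U : Set X, IsOpen U ∧ U ∩ S = {x}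

/-- The hyperspace of nontrivial convergent sequences of `X`. -/
def Sc (X : Type*) [TopologicalSpace X] : Type _ :=
  {S : Set X // IsNCS X S}

instance (X : Type*) [TopologicalSpace X] : TopologicalSpace (Sc X) :=
  TopologicalSpace.induced (fun S : Sc X => S.1) (vietoris X)


/-- The topology of the space `ξ(F) = ℕ ∪ {F}` (coded as `Option ℕ`, with `none` playing
the role of the point `F`): points of `ℕ` are isolated, and neighborhoods of `none`
are the sets `A ∪ {none}` with `A ∈ F`. -/
def xiTop (F : Filter ℕ) : TopologicalSpace (Option ℕ) where
  IsOpen U := none ∈ U → {n : ℕ | some n ∈ U} ∈ F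
  isOpen_univ := fun _ => Filter.univ_mem
  isOpen_inter := fun U V hU hV h => Filter.inter_mem (hU h.1) (hV h.2)
  isOpen_sUnion := fun s hs h => by
    obtain ⟨t, ht, hnt⟩ := h
    exact Filter.mem_of_superset (hs t ht hnt) (fun n hn => ⟨t, ht, hn⟩)

open Topology

section ConvTo

variable {X : Type*} [TopologicalSpace X] {S : Set X} {x : X}

lemma ConvTo.union_finite (hS : ConvTo S x) {u : Set X} (hu : u.Finite) : ConvTo (S ∪ u) x :=
  ⟨Or.inl hS.1, fun U hU hxU => ((hS.2 U hU hxU).union hu).subset (by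
    rw [union_sdiff_distrib]; exact union_subset_union_right _ sdiff_subset)⟩

lemma ConvTo.infinite_inter (hS : ConvTo S x) (hinf : S.Infinite) {U : Set X} (hU : IsOpen U)
    (hxU : x ∈ U) : (S ∩ U).Infinite := by
  simpa only [sdiff_sdiff_right_self] using hinf.sdiff (hS.2 U hU hxU)

end ConvTo

section OneNonIsolatedPoint

variable {X : Type*} [TopologicalSpace X] {x : X}

lemma isOpen_of_notMem (hiso : ∀ y, y ≠ x → IsOpen ({y} : Set X)) {U : Set X} (hU : x ∉ U) :
    IsOpen U := by
  rw [← biUnion_of_singleton U]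
  exact isOpen_biUnion fun y hy => hiso y (ne_of_mem_of_not_mem hy hU)

lemma isNCS_iff (hiso : ∀ y, y ≠ x → IsOpen ({y} : Set X)) {S : Set X} :
    IsNCS X S ↔ S.Infinite ∧ S.Countable ∧ ConvTo S x := by
  constructor
  · rintro ⟨hinf, hcount, -, x', hconv, -, hniso⟩
    obtain rfl : x' = x := by
      by_contra hne
      exact hniso ⟨{x'}, hiso x' hne, inter_eq_left.2 (singleton_subset_iff.2 hconv.1)⟩
    exact ⟨hinf, hcount, hconv⟩
  · rintro ⟨hinf, hcount, hconv⟩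
    refine ⟨hinf, hcount, ⟨isOpen_of_notMem hiso (notMem_compl_iff.2 hconv.1)⟩, x, hconv,
      fun y hy hne => ⟨{y}, hiso y hne, inter_eq_left.2 (singleton_subset_iff.2 hy)⟩, ?_⟩
    rintro ⟨U, hU, hUS⟩
    have hxU : x ∈ U := (hUS.symm ▸ mem_singleton x : x ∈ U ∩ S).1
    refine hinf (((hconv.2 U hU hxU).union (finite_singleton x)).subset fun y hy => ?_)
    by_cases hyU : y ∈ U
    · have hy' : y ∈ U ∩ S := ⟨hyU, hy⟩
      rw [hUS] at hy'
      exact Or.inr hy'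
    · exact Or.inl ⟨hy, hyU⟩

lemma IsNCS.union_finite (hiso : ∀ y, y ≠ x → IsOpen ({y} : Set X)) {S : Set X}
    (hS : IsNCS X S) {u : Set X} (hu : u.Finite) : IsNCS X (S ∪ u) := by
  obtain ⟨hinf, hcount, hconv⟩ := (isNCS_iff hiso).1 hS
  exact (isNCS_iff hiso).2
    ⟨hinf.mono subset_union_left, hcount.union hu.countable, hconv.union_finite hu⟩

end OneNonIsolatedPoint

section Vietoris

variable {X : Type*} [TopologicalSpace X]

lemma vietoris_isOpen_setOf_inter_nonempty {U : Set X} (hU : IsOpen U) :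
    IsOpen[vietoris X] {R : Set X | (R ∩ U).Nonempty} :=
  GenerateOpen.basic _ (Or.inr ⟨U, hU, rfl⟩)

lemma vietoris_exists_Icc_subset {W : Set (Set X)} (hW : IsOpen[vietoris X] W) {T : Set X}
    (hT : T ∈ W) : ∃ U : Set X, IsOpen U ∧ T ⊆ U ∧ Icc T U ⊆ W := by
  induction hW generalizing T with
  | basic g hg =>
    rcases hg with ⟨U, hU, rfl⟩ | ⟨U, hU, rfl⟩
    · exact ⟨U, hU, hT, fun R hR => hR.2⟩
    · exact ⟨univ, isOpen_univ, subset_univ T, fun R hR => hT.mono (inter_subset_inter_left U hR.1)⟩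
  | univ => exact ⟨univ, isOpen_univ, subset_univ T, subset_univ _⟩
  | inter W₁ W₂ _ _ ih₁ ih₂ =>
    obtain ⟨U₁, hU₁, hTU₁, h₁⟩ := ih₁ hT.1
    obtain ⟨U₂, hU₂, hTU₂, h₂⟩ := ih₂ hT.2
    refine ⟨U₁ ∩ U₂, hU₁.inter hU₂, subset_inter hTU₁ hTU₂, fun R hR => ⟨h₁ ?_, h₂ ?_⟩⟩
    · exact ⟨hR.1, hR.2.trans inter_subset_left⟩
    · exact ⟨hR.1, hR.2.trans inter_subset_right⟩
  | sUnion s _ ih =>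
    obtain ⟨W', hW's, hTW'⟩ := hT
    obtain ⟨U, hU, hTU, h⟩ := ih W' hW's hTW'
    exact ⟨U, hU, hTU, fun R hR => ⟨W', hW's, h hR⟩⟩

lemma Sc.isOpen_preimage_val {W : Set (Set X)} (hW : IsOpen[vietoris X] W) :
    IsOpen ((fun T : Sc X => T.1) ⁻¹' W) :=
  @isOpen_induced _ _ (vietoris X) _ _ hW

end Vietoris

section Hyperspace

variable {X : Type*} [TopologicalSpace X] {x : X}

lemma Sc.isOpen_setOf_mem (hiso : ∀ y, y ≠ x → IsOpen ({y} : Set X)) (a : X) :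
    IsOpen {T : Sc X | a ∈ T.1} := by
  by_cases ha : a = x
  · subst ha
    convert isOpen_univ
    exact eq_univ_of_forall fun T => ((isNCS_iff hiso).1 T.2).2.2.1
  · have := Sc.isOpen_preimage_val (vietoris_isOpen_setOf_inter_nonempty (hiso a ha))
    simp only [inter_singleton_nonempty] at this
    exact this

lemma Sc.isOpen_setOf_subset (hiso : ∀ y, y ≠ x → IsOpen ({y} : Set X)) (u : Finset X) :
    IsOpen {T : Sc X | ↑u ⊆ T.1} := by
  have : {T : Sc X | ↑u ⊆ T.1} = ⋂ a ∈ u, {T : Sc X | a ∈ T.1} := by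
    ext T
    simp only [mem_ofPred_eq, mem_iInter, Finset.mem_coe, subset_def]
  rw [this]
  exact isOpen_biInter_finset fun a _ => Sc.isOpen_setOf_mem hiso a

lemma Sc.isOpen_setOf_card_inter_ge (hiso : ∀ y, y ≠ x → IsOpen ({y} : Set X)) (S : Sc X)
    (n : ℕ) : IsOpen {T : Sc X | ∃ u : Finset X, ↑u ⊆ T.1 ∩ S.1 ∧ n ≤ u.card} := by
  refine isOpen_iff_mem_nhds.2 fun T ⟨u, hu, hn⟩ => ?_
  refine mem_of_superset ((Sc.isOpen_setOf_subset hiso u).mem_nhds (hu.trans inter_subset_left))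
    fun R hR => ⟨u, subset_inter hR (hu.trans inter_subset_right), hn⟩

lemma Sc.dense_setOf_card_inter_ge (hiso : ∀ y, y ≠ x → IsOpen ({y} : Set X)) (S : Sc X)
    (n : ℕ) : Dense {T : Sc X | ∃ u : Finset X, ↑u ⊆ T.1 ∩ S.1 ∧ n ≤ u.card} := by
  rw [dense_iff_inter_open]
  rintro V hV ⟨T, hTV⟩
  obtain ⟨W, hW, rfl⟩ := (@isOpen_induced_iff _ _ (vietoris X) _ _).1 hV
  obtain ⟨U, hU, hTU, hIcc⟩ := vietoris_exists_Icc_subset hW hTV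
  obtain ⟨-, -, hTconv⟩ := (isNCS_iff hiso).1 T.2
  obtain ⟨hSinf, -, hSconv⟩ := (isNCS_iff hiso).1 S.2
  obtain ⟨u, huSU, hcard⟩ :=
    (hSconv.infinite_inter hSinf hU (hTU hTconv.1)).exists_subset_card_eq n
  refine ⟨⟨T.1 ∪ u, T.2.union_finite hiso u.finite_toSet⟩, ?_, u, ?_, hcard.ge⟩
  · exact hIcc ⟨subset_union_left, union_subset hTU (huSU.trans inter_subset_right)⟩
  · exact subset_inter subset_union_right (huSU.trans inter_subset_left)

end Hyperspace

lemma xiTop_isOpen_singleton (F : Filter ℕ) {y : Option ℕ} (hy : y ≠ none) :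
    IsOpen[xiTop F] {y} :=
  fun h => absurd (mem_singleton_iff.1 h).symm hy

theorem stmt8_general (F : Filter ℕ) :
    letI : TopologicalSpace (Option ℕ) := xiTop F
    FrechetUrysohnSpace (Option ℕ) →
    ∀ (S : Sc (Option ℕ)) (n : ℕ),
      IsOpen {T : Sc (Option ℕ) | ∃ u : Finset (Option ℕ), ↑u ⊆ T.1 ∩ S.1 ∧ n ≤ u.card} ∧
      Dense {T : Sc (Option ℕ) | ∃ u : Finset (Option ℕ), ↑u ⊆ T.1 ∩ S.1 ∧ n ≤ u.card} := by
  let _ : TopologicalSpace (Option ℕ) := xiTop F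
  intro _ S n
  have hiso (y : Option ℕ) (hy : y ≠ none) : IsOpen {y} := xiTop_isOpen_singleton F hy
  exact ⟨Sc.isOpen_setOf_card_inter_ge hiso S n, Sc.dense_setOf_card_inter_ge hiso S n⟩

/-- For a free filter `F` with `ξ(F)` Fréchet–Urysohn, for every nontrivial
convergent sequence `S` of `ξ(F)` and every `n`, the set
`D_S^n = {T ∈ S_c(ξ(F)) : |T ∩ S| ≥ n}` is open and dense in `S_c(ξ(F))`. -/
theorem stmt8 (F : Filter ℕ) (hfree : F ≤ Filter.cofinite) :
    letI : TopologicalSpace (Option ℕ) := xiTop F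
    FrechetUrysohnSpace (Option ℕ) →
    ∀ (S : Sc (Option ℕ)) (n : ℕ),
      IsOpen {T : Sc (Option ℕ) | ∃ u : Finset (Option ℕ), ↑u ⊆ T.1 ∩ S.1 ∧ n ≤ u.card} ∧
      Dense {T : Sc (Option ℕ) | ∃ u : Finset (Option ℕ), ↑u ⊆ T.1 ∩ S.1 ∧ n ≤ u.card} :=
  stmt8_general F
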